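/- Assume that the Martin space ℳ is first-countable. Then for every w ∈ ℳᵐ there exists an almost-geodesic (i_k)_{k≥0} with respect to π such that K_{·i_k} converges to w in the product topology. -/

import Mathlib

open Filter Topology

noncomputable section

namespace MaxPlus

variable {S : Type*}

/-- Weight of the path `p 0, p 1, ..., p n` for the kernel `A`. -/
def pathWeight (A : S → S → EReal) (p : ℕ → S) (n : ℕ) : EReal :=
  ∑ k ∈ Finset.range n, A (p k) (p (k + 1))

/-- The max-plus star kernel `A*`: supremum of weights of paths of length `≥ 0`. -/
def star (A : S → S → EReal) (i j : S) : EReal :=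
  ⨆ (n : ℕ) (p : ℕ → S) (_ : p 0 = i ∧ p n = j), pathWeight A p n

/-- The max-plus kernel `A⁺`: supremum of weights of paths of length `≥ 1`. -/
def plus (A : S → S → EReal) (i j : S) : EReal :=
  ⨆ (n : ℕ) (_ : 1 ≤ n) (p : ℕ → S) (_ : p 0 = i ∧ p n = j), pathWeight A p n

/-- `π` is a left super-harmonic row vector (with full support, being real valued). -/
def LeftSuperharmonic (A : S → S → EReal) (π : S → ℝ) : Prop :=
  ∀ j, (⨆ i, ((π i : EReal) + A i j)) ≤ (π j : EReal)

/-- The Martin kernel `K_{ij} = A*_{ij} - π_j`. -/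
def K (A : S → S → EReal) (π : S → ℝ) (i j : S) : EReal :=
  star A i j - (π j : EReal)

/-- `K♭_{ij} = A⁺_{ij} - π_j`. -/
def Kflat (A : S → S → EReal) (π : S → ℝ) (i j : S) : EReal :=
  plus A i j - (π j : EReal)

/-- The set `𝒦` of columns of the Martin kernel. -/
def kerCols (A : S → S → EReal) (π : S → ℝ) : Set (S → EReal) :=
  Set.range fun j => fun i => K A π i j

/-- The Martin space `ℳ`: closure of `𝒦` in the product topology. -/
def martin (A : S → S → EReal) (π : S → ℝ) : Set (S → EReal) :=
  closure (kerCols A π)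

/-- `μ_u(w)`: the limsup of `π_j + u_j` as `K_{·j} → w`. -/
def mu (A : S → S → EReal) (π : S → ℝ) (u : S → EReal) (w : S → EReal) : EReal :=
  ⨅ (W : Set (S → EReal)) (_ : W ∈ 𝓝 w),
    ⨆ (j : S) (_ : (fun i => K A π i j) ∈ W), ((π j : EReal) + u j)

/-- `w♭_i`: the liminf of `K♭_{ij}` as `K_{·j} → w`. -/
def flat (A : S → S → EReal) (π : S → ℝ) (w : S → EReal) (i : S) : EReal :=
  ⨆ (W : Set (S → EReal)) (_ : W ∈ 𝓝 w),
    ⨅ (j : S) (_ : (fun i' => K A π i' j) ∈ W), Kflat A π i j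

/-- The kernel `H(z,w) = μ_w(z)`. -/
def H (A : S → S → EReal) (π : S → ℝ) (z w : S → EReal) : EReal := mu A π w z

/-- The kernel `H♭(z,w) = μ_{w♭}(z)`. -/
def Hflat (A : S → S → EReal) (π : S → ℝ) (z w : S → EReal) : EReal :=
  mu A π (flat A π w) z

/-- The minimal Martin space `ℳᵐ = {w ∈ ℳ : H♭(w,w) = 0}`. -/
def martinMin (A : S → S → EReal) (π : S → ℝ) : Set (S → EReal) :=
  {w | w ∈ martin A π ∧ Hflat A π w w = 0}

/-- The maximal circuit mean `ρ(A)`. -/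
def maxCircuitMean (A : S → S → EReal) : EReal :=
  ⨆ (k : ℕ) (_ : 1 ≤ k) (p : ℕ → S) (_ : p k = p 0),
    (((k : ℝ)⁻¹ : ℝ) : EReal) * pathWeight A p k

/-- `α`-almost-geodesic with respect to the left super-harmonic vector `π`. -/
def IsAlmostGeodesic (A : S → S → EReal) (π : S → ℝ) (x : ℕ → S) : Prop :=
  ∃ α : ℝ, 0 ≤ α ∧ ∀ k : ℕ,
    (π (x k) : EReal) ≤ (α : EReal) + (π (x 0) : EReal) + pathWeight A x k

/-- The set `𝒮` of `π`-integrable super-harmonic vectors. -/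
def Sset (A : S → S → EReal) (π : S → ℝ) : Set (S → EReal) :=
  {u | (∀ i, u i ≠ ⊤) ∧ (∀ i, (⨆ j, A i j + u j) ≤ u i) ∧
    (⨆ j, ((π j : EReal) + u j)) < ⊤}

/-- The set `ℋ` of `π`-integrable harmonic vectors. -/
def Hset (A : S → S → EReal) (π : S → ℝ) : Set (S → EReal) :=
  {u | (∀ i, u i ≠ ⊤) ∧ (∀ i, (⨆ j, A i j + u j) = u i) ∧
    (⨆ j, ((π j : EReal) + u j)) < ⊤}

/-- A vector is normalised if `sup_j (π_j + u_j) = 0`. -/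
def Normalised (π : S → ℝ) (u : S → EReal) : Prop :=
  (⨆ j, ((π j : EReal) + u j)) = 0

/-- `ξ` is an extremal generator of `V`. -/
def ExtremalGen (V : Set (S → EReal)) (ξ : S → EReal) : Prop :=
  ξ ∈ V ∧ ξ ≠ (fun _ => (⊥ : EReal)) ∧
    ∀ u v, u ∈ V → v ∈ V → ξ = (fun i => u i ⊔ v i) → ξ = u ∨ ξ = v

end MaxPlus

/-!
Since `H♭(w, w) = 0`, every neighbourhood of `w` contains a column `K_{·j}` such that every
column `K_{·j'}` close enough to `w` is reached from `j` by a path of weight at least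
`π_{j'} - π_j - ε`. Along a countable neighbourhood basis of `w` in `ℳ` we pick such `j_k` for
`ε_k = 2⁻ᵏ`, each `j_{k+1}` close enough for `j_k`, and concatenate the paths from `j_k` to
`j_{k+1}`. Superharmonicity of `π` makes the defect `π_{p_n} - π_{p_0} - weight` of a path
nonnegative and additive, so the concatenation is a `2`-almost-geodesic, and inside the `k`-th
piece the columns `K_{·x_m}` lie above `K_{·j_k} - ε_k` and below `K_{·j_{k+1}} + ε_k`; hence they
converge to `w`.
-/

theorem EReal.tendsto_add_coe_of_tendsto_zero {α : Type*} {l : Filter α} {f : α → EReal}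
    {g : α → ℝ} {a : EReal} (hf : Tendsto f l (𝓝 a)) (hg : Tendsto g l (𝓝 0)) :
    Tendsto (fun x => f x + g x) l (𝓝 a) := by
  have h := (EReal.continuousAt_add (p := (a, ((0 : ℝ) : EReal))) (.inr (by simp))
    (.inr (by simp))).tendsto.comp (hf.prodMk_nhds (EReal.tendsto_coe.2 hg))
  simp only [EReal.coe_zero, add_zero] at h
  exact h

theorem StrictMono.existsUnique_le_lt_succ {t : ℕ → ℕ} (ht : StrictMono t) {m : ℕ}
    (hm : t 0 ≤ m) : ∃! k, t k ≤ m ∧ m < t (k + 1) := by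
  classical
  have hex : ∃ k, m < t k := ⟨m + 1, m.lt_succ_self.trans_le (ht.id_le _)⟩
  have hfind : Nat.find hex ≠ 0 := fun h0 => (h0 ▸ Nat.find_spec hex).not_ge hm
  obtain ⟨k, hk⟩ := Nat.exists_eq_add_one_of_ne_zero hfind
  have hlt : m < t (k + 1) := hk ▸ Nat.find_spec hex
  have hle : t k ≤ m := not_lt.1 (Nat.find_min hex (hk ▸ k.lt_succ_self))
  refine ⟨k, ⟨hle, hlt⟩, fun k' ⟨hk'₁, hk'₂⟩ => ?_⟩
  have h₁ := ht.lt_iff_lt.1 (hk'₁.trans_lt hlt)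
  have h₂ := ht.lt_iff_lt.1 (hle.trans_lt hk'₂)
  omega

theorem exists_seq_nhds_tendsto_of_firstCountable {X : Type*} [TopologicalSpace X] {s : Set X}
    [FirstCountableTopology s] {w : X} (hw : w ∈ s) :
    ∃ U : ℕ → Set X, (∀ k, U k ∈ 𝓝 w) ∧
      ∀ z : ℕ → X, (∀ k, z k ∈ s) → (∀ k, z k ∈ U k) → Tendsto z atTop (𝓝 w) := by
  obtain ⟨V, hV⟩ := (𝓝 (⟨w, hw⟩ : s)).exists_antitone_basis
  have hU : ∀ k, ∃ U ∈ 𝓝 w, Subtype.val ⁻¹' U ⊆ V k := fun k => by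
    simpa only [nhds_subtype, mem_comap] using hV.mem k
  choose U hUw hUV using hU
  refine ⟨U, hUw, fun z hzs hzU => ?_⟩
  have hz : Tendsto (fun k => (⟨z k, hzs k⟩ : s)) atTop (𝓝 ⟨w, hw⟩) :=
    hV.tendsto fun k => hUV k (hzU k)
  exact (continuous_subtype_val.tendsto _).comp hz

theorem Filter.exists_seq_forall_mem_of_frequently_eventually {α : Type*} {f : Filter α}
    {R : ℕ → α → α → Prop} {U : ℕ → Set α} (hU : ∀ k, U k ∈ f)
    (h : ∀ k, ∃ᶠ a in f, ∀ᶠ b in f, R k a b) :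
    ∃ x : ℕ → α, (∀ k, x k ∈ U k) ∧ ∀ k, R k (x k) (x (k + 1)) := by
  have hpick : ∀ k, ∀ V ∈ f, ∃ a ∈ U k ∩ V, ∀ᶠ b in f, R k a b := fun k V hV =>
    ((h k).and_eventually (inter_mem (hU k) hV)).exists.imp fun _ ha => ⟨ha.2, ha.1⟩
  obtain ⟨a₀, ha₀, ha₀R⟩ := hpick 0 Set.univ univ_mem
  -- each term carries the proof that its relation eventually holds, on which the next choice relies
  choose next hnextU hnextR using fun k (a : {a // ∀ᶠ b in f, R k a b}) => hpick (k + 1) _ a.2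
  let y : ∀ k, {a // ∀ᶠ b in f, R k a b} := fun k =>
    Nat.rec (motive := fun k => {a // ∀ᶠ b in f, R k a b}) ⟨a₀, ha₀R⟩
      (fun k a => ⟨next k a, hnextR k a⟩) k
  refine ⟨fun k => (y k).1, ?_, fun k => (hnextU k (y k)).2⟩
  rintro (_ | k)
  · exact ha₀.1
  · exact (hnextU k (y k)).1

namespace MaxPlus

section

variable {S : Type*} {A : S → S → EReal} {π : S → ℝ}

theorem pathWeight_zero (p : ℕ → S) : pathWeight A p 0 = 0 := Finset.sum_range_zero _

theorem pathWeight_add (p : ℕ → S) (a b : ℕ) :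
    pathWeight A p (a + b) = pathWeight A p a + pathWeight A (fun s => p (a + s)) b :=
  Finset.sum_range_add _ _ _

theorem pathWeight_congr {p q : ℕ → S} {n : ℕ} (h : ∀ k ≤ n, p k = q k) :
    pathWeight A p n = pathWeight A q n :=
  Finset.sum_congr rfl fun k hk => by
    rw [h k (Finset.mem_range.1 hk).le, h (k + 1) (Finset.mem_range.1 hk)]

theorem pathWeight_le_star (p : ℕ → S) (n : ℕ) : pathWeight A p n ≤ star A (p 0) (p n) :=
  le_iSup_of_le n <| le_iSup_of_le p <| le_iSup_of_le ⟨rfl, rfl⟩ le_rfl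

theorem exists_path_of_lt_star {i j : S} {c : EReal} (h : c < star A i j) :
    ∃ n, ∃ p : ℕ → S, (p 0 = i ∧ p n = j) ∧ c < pathWeight A p n := by
  simpa only [star, lt_iSup_iff, exists_prop] using h

theorem exists_path_of_lt_plus {i j : S} {c : EReal} (h : c < plus A i j) :
    ∃ n, 0 < n ∧ ∃ p : ℕ → S, (p 0 = i ∧ p n = j) ∧ c < pathWeight A p n := by
  simp only [plus, lt_iSup_iff, exists_prop] at h
  exact h

theorem star_add_pathWeight_le (i : S) (q : ℕ → S) (m : ℕ) :
    star A i (q 0) + pathWeight A q m ≤ star A i (q m) := by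
  refine EReal.add_le_of_forall_lt fun a ha b hb => ?_
  obtain ⟨n, p, ⟨hp0, hpn⟩, hap⟩ := exists_path_of_lt_star ha
  let r : ℕ → S := fun k => if k < n then p k else q (k - n)
  have hr : pathWeight A r (n + m) = pathWeight A p n + pathWeight A q m := by
    rw [pathWeight_add]
    congr 1
    · refine pathWeight_congr fun k hk => ?_
      rcases hk.lt_or_eq with hk | rfl
      · simp [r, hk]
      · simp [r, hpn]
    · exact pathWeight_congr fun k _ => by simp [r]
  have hr0 : r 0 = i := by
    rcases n.eq_zero_or_pos with rfl | hn
    · simp [r, ← hpn, hp0]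
    · simp [r, hn, hp0]
  calc a + b ≤ pathWeight A p n + pathWeight A q m := add_le_add hap.le hb.le
    _ = pathWeight A r (n + m) := hr.symm
    _ ≤ star A (r 0) (r (n + m)) := pathWeight_le_star r (n + m)
    _ = star A i (q m) := by simp [hr0, r]

theorem LeftSuperharmonic.pathWeight_le (hπ : LeftSuperharmonic A π) (p : ℕ → S) (n : ℕ) :
    pathWeight A p n ≤ ((π (p n) - π (p 0) : ℝ) : EReal) := by
  induction n with
  | zero => simp [pathWeight_zero]
  | succ n ih =>
    have hstep : (π (p n) : EReal) + A (p n) (p (n + 1)) ≤ π (p (n + 1)) :=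
      (le_iSup (fun i => (π i : EReal) + A i (p (n + 1))) (p n)).trans (hπ _)
    calc pathWeight A p (n + 1) = pathWeight A p n + A (p n) (p (n + 1)) :=
          Finset.sum_range_succ _ _
      _ ≤ ((π (p n) - π (p 0) : ℝ) : EReal) + A (p n) (p (n + 1)) := add_le_add_left ih _
      _ = ((π (p n) : EReal) + A (p n) (p (n + 1))) + ((-π (p 0) : ℝ) : EReal) := by
          rw [EReal.coe_sub, sub_eq_add_neg, EReal.coe_neg, add_right_comm]
      _ ≤ (π (p (n + 1)) : EReal) + ((-π (p 0) : ℝ) : EReal) := add_le_add_left hstep _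
      _ = ((π (p (n + 1)) - π (p 0) : ℝ) : EReal) := by
          rw [EReal.coe_neg, ← sub_eq_add_neg, EReal.coe_sub]

/-- The `α`-almost-geodesic inequality at the endpoint of a path (see `coe_le_add`). As
superharmonicity bounds the weight by `π (p n) - π (p 0)`, it says that the path is within `α`
of optimal. -/
def IsAlmostGeodesicPath (A : S → S → EReal) (π : S → ℝ) (α : ℝ) (p : ℕ → S) (n : ℕ) : Prop :=
  ((π (p n) - π (p 0) - α : ℝ) : EReal) ≤ pathWeight A p n

namespace IsAlmostGeodesicPath

variable {α β : ℝ} {p q : ℕ → S} {n : ℕ}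

theorem mono (h : IsAlmostGeodesicPath A π α p n) (hαβ : α ≤ β) :
    IsAlmostGeodesicPath A π β p n :=
  (EReal.coe_le_coe_iff.2 (by linarith)).trans h

theorem congr (h : IsAlmostGeodesicPath A π α p n) (hpq : ∀ k ≤ n, p k = q k) :
    IsAlmostGeodesicPath A π α q n := by
  rwa [IsAlmostGeodesicPath, ← pathWeight_congr hpq, ← hpq 0 n.zero_le, ← hpq n le_rfl]

theorem append {a b : ℕ} (h₁ : IsAlmostGeodesicPath A π α p a)
    (h₂ : IsAlmostGeodesicPath A π β (fun s => p (a + s)) b) :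
    IsAlmostGeodesicPath A π (α + β) p (a + b) := by
  rw [IsAlmostGeodesicPath, pathWeight_add]
  calc ((π (p (a + b)) - π (p 0) - (α + β) : ℝ) : EReal)
      = ((π (p a) - π (p 0) - α : ℝ) : EReal) +
          ((π (p (a + b)) - π (p (a + 0)) - β : ℝ) : EReal) := by
        rw [add_zero, ← EReal.coe_add]
        ring_nf
    _ ≤ _ := add_le_add h₁ h₂

theorem of_add (hπ : LeftSuperharmonic A π) {a b : ℕ}
    (h : IsAlmostGeodesicPath A π α p (a + b)) :
    IsAlmostGeodesicPath A π α p a ∧ IsAlmostGeodesicPath A π α (fun s => p (a + s)) b := by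
  have h₁ := hπ.pathWeight_le p a
  have h₂ := hπ.pathWeight_le (fun s => p (a + s)) b
  rw [IsAlmostGeodesicPath, pathWeight_add] at h
  simp only [IsAlmostGeodesicPath, add_zero] at h₂ ⊢
  constructor
  · have h' := EReal.sub_le_of_le_add (h.trans (add_le_add_right h₂ _))
    rw [← EReal.coe_sub] at h'
    convert h' using 2
    ring
  · have h' := EReal.sub_le_of_le_add' (h.trans (add_le_add_left h₁ _))
    rw [← EReal.coe_sub] at h'
    convert h' using 2
    ring

theorem initialSegment (hπ : LeftSuperharmonic A π) (h : IsAlmostGeodesicPath A π α p n) {r : ℕ}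
    (hr : r ≤ n) : IsAlmostGeodesicPath A π α p r := by
  rw [← Nat.add_sub_of_le hr] at h
  exact (h.of_add hπ).1

theorem finalSegment (hπ : LeftSuperharmonic A π) (h : IsAlmostGeodesicPath A π α p n) {r : ℕ}
    (hr : r ≤ n) : IsAlmostGeodesicPath A π α (fun s => p (r + s)) (n - r) := by
  rw [← Nat.add_sub_of_le hr] at h
  simpa using (h.of_add hπ).2

theorem K_le (h : IsAlmostGeodesicPath A π α p n) (i : S) :
    K A π i (p 0) ≤ K A π i (p n) + α := by
  have hstar := (add_le_add_right h _).trans (star_add_pathWeight_le (A := A) i p n)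
  unfold K
  generalize star A i (p 0) = x, star A i (p n) = y at hstar ⊢
  induction x using EReal.rec <;> induction y using EReal.rec <;>
    simp_all [← EReal.coe_sub, ← EReal.coe_add]
  linarith

theorem coe_le_add (h : IsAlmostGeodesicPath A π α p n) :
    (π (p n) : EReal) ≤ α + π (p 0) + pathWeight A p n :=
  calc (π (p n) : EReal)
      = ((α + π (p 0) : ℝ) : EReal) + ((π (p n) - π (p 0) - α : ℝ) : EReal) := by
        rw [← EReal.coe_add]
        ring_nf
    _ ≤ α + π (p 0) + pathWeight A p n := by
        rw [EReal.coe_add]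
        exact add_le_add_right h _

end IsAlmostGeodesicPath

theorem strictMono_of_succ_eq_add {t n : ℕ → ℕ} (ht : ∀ k, t (k + 1) = t k + n k)
    (hn : ∀ k, 0 < n k) : StrictMono t :=
  strictMono_nat_of_lt_succ fun k => by rw [ht k]; exact Nat.lt_add_of_pos_right (hn k)

theorem exists_concat {t n : ℕ → ℕ} (ht0 : t 0 = 0) (ht : ∀ k, t (k + 1) = t k + n k)
    (hn : ∀ k, 0 < n k) (p : ℕ → ℕ → S) (hp : ∀ k, p k (n k) = p (k + 1) 0) :
    ∃ x : ℕ → S, ∀ k, ∀ r ≤ n k, x (t k + r) = p k r := by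
  have htm := strictMono_of_succ_eq_add ht hn
  choose κ hκ hκ_unique using fun m : ℕ =>
    htm.existsUnique_le_lt_succ (m := m) (by rw [ht0]; exact m.zero_le)
  refine ⟨fun m => p (κ m) (m - t (κ m)), fun k r hr => ?_⟩
  rcases hr.lt_or_eq with hr | rfl
  · have hk : κ (t k + r) = k := (hκ_unique _ k ⟨le_self_add, by rw [ht]; omega⟩).symm
    simp [hk]
  · have hk : κ (t k + n k) = k + 1 :=
      (hκ_unique _ (k + 1) ⟨(ht k).le, by rw [← ht]; exact htm (k + 1).lt_succ_self⟩).symm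
    dsimp only
    rw [hk, ← ht, Nat.sub_self, hp]

theorem isAlmostGeodesic_of_concat (hπ : LeftSuperharmonic A π) {x : ℕ → S} {t n : ℕ → ℕ}
    {ε : ℕ → ℝ} {α : ℝ} (ht0 : t 0 = 0) (ht : ∀ k, t (k + 1) = t k + n k) (hn : ∀ k, 0 < n k)
    (hseg : ∀ k, IsAlmostGeodesicPath A π (ε k) (fun s => x (t k + s)) (n k))
    (hε : ∀ k, ∑ l ∈ Finset.range k, ε l ≤ α) :
    IsAlmostGeodesic A π x := by
  have hcum : ∀ k, IsAlmostGeodesicPath A π (∑ l ∈ Finset.range k, ε l) x (t k) := by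
    intro k
    induction k with
    | zero => simp [IsAlmostGeodesicPath, ht0, pathWeight_zero]
    | succ k ih => rw [Finset.sum_range_succ, ht]; exact ih.append (hseg k)
  refine ⟨α, by simpa using hε 0, fun m => ?_⟩
  have hm := ((hcum m).mono (hε m)).initialSegment hπ ((strictMono_of_succ_eq_add ht hn).id_le m)
  exact hm.coe_le_add

theorem tendsto_K_of_concat (hπ : LeftSuperharmonic A π) {x : ℕ → S} {t n : ℕ → ℕ}
    {ε : ℕ → ℝ} {w : S → EReal} (ht0 : t 0 = 0) (ht : ∀ k, t (k + 1) = t k + n k)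
    (hn : ∀ k, 0 < n k)
    (hseg : ∀ k, IsAlmostGeodesicPath A π (ε k) (fun s => x (t k + s)) (n k))
    (hε : Tendsto ε atTop (𝓝 0)) (hw : Tendsto (fun k i => K A π i (x (t k))) atTop (𝓝 w)) :
    Tendsto (fun m i => K A π i (x m)) atTop (𝓝 w) := by
  have htm := strictMono_of_succ_eq_add ht hn
  choose κ hκ using fun m : ℕ =>
    (htm.existsUnique_le_lt_succ (m := m) (by rw [ht0]; exact m.zero_le)).exists
  have hκ_tendsto : Tendsto κ atTop atTop := tendsto_atTop_atTop.2 fun k =>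
    ⟨t k, fun m hm => Nat.lt_succ_iff.1 (htm.lt_iff_lt.1 (hm.trans_lt (hκ m).2))⟩
  have hbounds : ∀ m i, K A π i (x (t (κ m))) - ε (κ m) ≤ K A π i (x m) ∧
      K A π i (x m) ≤ K A π i (x (t (κ m + 1))) + ε (κ m) := by
    intro m i
    have hr : m - t (κ m) ≤ n (κ m) := by have := (hκ m).2; rw [ht] at this; omega
    have h₁ := ((hseg (κ m)).initialSegment hπ hr).K_le i
    have h₂ := ((hseg (κ m)).finalSegment hπ hr).K_le i
    simp only [add_zero, Nat.add_sub_of_le (hκ m).1, Nat.add_sub_of_le hr, ← ht] at h₁ h₂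
    exact ⟨EReal.sub_le_of_le_add h₁, h₂⟩
  rw [tendsto_pi_nhds] at hw ⊢
  intro i
  have hlower : Tendsto (fun m => K A π i (x (t (κ m))) - ε (κ m)) atTop (𝓝 (w i)) := by
    simp only [sub_eq_add_neg, ← EReal.coe_neg]
    exact EReal.tendsto_add_coe_of_tendsto_zero ((hw i).comp hκ_tendsto)
      (by simpa using (hε.comp hκ_tendsto).neg)
  have hupper : Tendsto (fun m => K A π i (x (t (κ m + 1))) + ε (κ m)) atTop (𝓝 (w i)) :=
    EReal.tendsto_add_coe_of_tendsto_zero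
      (((hw i).comp (tendsto_add_atTop_nat 1)).comp hκ_tendsto) (hε.comp hκ_tendsto)
  exact tendsto_of_tendsto_of_tendsto_of_le_of_le hlower hupper (fun m => (hbounds m i).1)
    fun m => (hbounds m i).2

theorem frequently_eventually_lt_Kflat {w : S → EReal} (hw : Hflat A π w w = 0) {ε : ℝ}
    (hε : 0 < ε) :
    ∃ᶠ j in comap (fun j i => K A π i j) (𝓝 w),
      ∀ᶠ j' in comap (fun j i => K A π i j) (𝓝 w), ((-ε - π j : ℝ) : EReal) < Kflat A π j j' := by
  rw [frequently_iff]
  intro V hV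
  obtain ⟨W, hW, hWV⟩ := mem_comap.1 hV
  have hsup : ((-ε : ℝ) : EReal) <
      ⨆ (j : S) (_ : (fun i => K A π i j) ∈ W), ((π j : EReal) + flat A π w j) :=
    (EReal.coe_lt_coe_iff.2 (neg_lt_zero.2 hε)).trans_le (hw.symm.trans_le (iInf₂_le W hW))
  simp only [lt_iSup_iff, exists_prop] at hsup
  obtain ⟨j, hjW, hj⟩ := hsup
  have hflat : ((-ε - π j : ℝ) : EReal) < flat A π w j := by
    rw [EReal.coe_sub]
    exact EReal.sub_lt_of_lt_add' hj
  simp only [flat, lt_iSup_iff, exists_prop] at hflat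
  obtain ⟨N, hN, hjN⟩ := hflat
  exact ⟨j, hWV hjW, mem_of_superset (preimage_mem_comap hN) fun j' hj' =>
    hjN.trans_le (iInf₂_le j' hj')⟩

theorem exists_isAlmostGeodesicPath_of_lt_Kflat {ε : ℝ} {i j : S}
    (h : ((-ε - π i : ℝ) : EReal) < Kflat A π i j) :
    ∃ n, 0 < n ∧ ∃ p : ℕ → S, (p 0 = i ∧ p n = j) ∧ IsAlmostGeodesicPath A π ε p n := by
  obtain ⟨n, hn, p, ⟨hp0, hpn⟩, hp⟩ := exists_path_of_lt_plus (EReal.add_lt_of_lt_sub h)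
  refine ⟨n, hn, p, ⟨hp0, hpn⟩, le_of_eq_of_le ?_ hp.le⟩
  rw [hp0, hpn, ← EReal.coe_add]
  ring_nf

end

theorem exists_almostGeodesic_of_mem_martinMin_general {S : Type*} (A : S → S → EReal)
    (π : S → ℝ) (hπ : LeftSuperharmonic A π)
    [FirstCountableTopology ↥(martin A π)]
    (w : S → EReal) (hw : w ∈ martinMin A π) :
    ∃ x : ℕ → S, IsAlmostGeodesic A π x ∧
      Tendsto (fun k => fun i => K A π i (x k)) atTop (𝓝 w) := by
  obtain ⟨U, hU, hUw⟩ := exists_seq_nhds_tendsto_of_firstCountable hw.1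
  obtain ⟨j, hjU, hj⟩ := exists_seq_forall_mem_of_frequently_eventually
    (fun k => preimage_mem_comap (hU k)) fun k =>
      (frequently_eventually_lt_Kflat hw.2 (by positivity : (0 : ℝ) < (1 / 2) ^ k)).mono
        fun _ h => h.mono fun _ => exists_isAlmostGeodesicPath_of_lt_Kflat
  choose n hn p hp hpath using hj
  let t : ℕ → ℕ := fun k => ∑ l ∈ Finset.range k, n l
  have ht : ∀ k, t (k + 1) = t k + n k := fun k => Finset.sum_range_succ _ _
  obtain ⟨x, hx⟩ := exists_concat rfl ht hn p fun k => (hp k).2.trans (hp (k + 1)).1.symm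
  have hseg : ∀ k, IsAlmostGeodesicPath A π ((1 / 2) ^ k) (fun s => x (t k + s)) (n k) :=
    fun k => (hpath k).congr fun r hr => (hx k r hr).symm
  have hxj : ∀ k, x (t k) = j k := fun k => (hx k 0 (Nat.zero_le _)).trans (hp k).1
  refine ⟨x, isAlmostGeodesic_of_concat hπ rfl ht hn hseg sum_geometric_two_le,
    tendsto_K_of_concat hπ rfl ht hn hseg
      (tendsto_pow_atTop_nhds_zero_of_lt_one (by norm_num) (by norm_num)) ?_⟩
  simp only [hxj]
  exact hUw _ (fun k => subset_closure (Set.mem_range_self (j k))) hjU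

/-- if the Martin space `ℳ` is first-countable, then every `w ∈ ℳᵐ` is the
limit of (the Martin kernel columns along) an almost-geodesic with respect to `π`. -/
theorem exists_almostGeodesic_of_mem_martinMin {S : Type*} (A : S → S → EReal)
    (hA : ∀ i j, A i j ≠ ⊤) (π : S → ℝ) (hπ : LeftSuperharmonic A π)
    [FirstCountableTopology ↥(martin A π)]
    (w : S → EReal) (hw : w ∈ martinMin A π) :
    ∃ x : ℕ → S, IsAlmostGeodesic A π x ∧
      Tendsto (fun k => fun i => K A π i (x k)) atTop (𝓝 w) :=
  exists_almostGeodesic_of_mem_martinMin_general A π hπ w hw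

end MaxPlus
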